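/- Let ε₁ = min{1/36, √L₂/(12L₁)}·ε^{3/2} and ε₂ = (√L₂/18)·ε^{1/2} with ε ≤ 1, and set M = max{‖g‖, ε}. Suppose H is self-adjoint with smallest eigenvalue λ_min(H) ≤ −½√(L₂M), u is a unit eigenvector of H for λ_min(H) with ⟨g, u⟩ ≤ 0, and s = √(M/L₂)·u. If ‖∇P(x) − g‖ ≤ ε₁, ‖∇²P(x) − H‖ ≤ ε₂ (operator norm), and ‖∇P(x+s) − g₊‖ ≤ ε₁, then P(x+s) ≤ P(x) − (1/(36√L₂))·M^{3/2} and ‖g₊‖ ≤ 1 + (L₁/√L₂)·√M + M. -/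

import Mathlib

noncomputable section

open RealInnerProductSpace

/-- `ℝⁿ` as a Euclidean space. -/
abbrev En (n : ℕ) := EuclideanSpace ℝ (Fin n)

/-- The Hessian of `P` at `x`, as the derivative of the gradient map. -/
def hessP {n : ℕ} (P : En n → ℝ) (x : En n) : En n →L[ℝ] En n := fderiv ℝ (gradient P) x

/-!
Along `s = a • u` with `a = √(M / L₂)`, the cubic Taylor bound for a function with
`L₂`-Lipschitz Hessian gives `P (x + s) ≤ P x + ⟪∇P x, s⟫ + ½ ⟪∇²P x s, s⟫ + L₂ a³ / 6`.
Replacing `∇P x` and `∇²P x` by `g` and `H` costs at most `ε₁ a` and `ε₂ a² / 2`, while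
`⟪g, s⟫ ≤ 0` and `⟪H s, s⟫ = λ a² ≤ -L₂ a³ / 2`. Since `L₂ a² = M ≥ ε`, the tolerances are
`ε₁ ≤ L₂ a² / 36` and `ε₂ ≤ L₂ a / 18`, so the total is at most `-L₂ a³ / 36 = -M^{3/2} / (36 √L₂)`.
The bound on `g₊` is the triangle inequality through `∇P (x + s)` and `∇P x`.
-/

open Set

theorem image_le_of_hasDerivAt_le_boundary {f f' B B' : ℝ → ℝ} {a b : ℝ}
    (hf : ∀ t, HasDerivAt f (f' t) t) (hB : ∀ t, HasDerivAt B (B' t) t) (ha : f a ≤ B a)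
    (bound : ∀ t ∈ Ico a b, f' t ≤ B' t) : ∀ ⦃t⦄, t ∈ Icc a b → f t ≤ B t :=
  image_le_of_deriv_right_le_deriv_boundary
    (HasDerivAt.continuousOn fun t _ => hf t) (fun t _ => (hf t).hasDerivWithinAt) ha
    (HasDerivAt.continuousOn fun t _ => hB t) (fun t _ => (hB t).hasDerivWithinAt) bound

theorem le_taylor_add_cubic_of_hasDerivAt {φ φ' φ'' : ℝ → ℝ} {K : ℝ}
    (hφ : ∀ t, HasDerivAt φ (φ' t) t) (hφ' : ∀ t, HasDerivAt φ' (φ'' t) t)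
    (hK : ∀ t ∈ Ico (0 : ℝ) 1, φ'' t ≤ φ'' 0 + K * t) :
    φ 1 ≤ φ 0 + φ' 0 + φ'' 0 / 2 + K / 6 := by
  have hB' (t : ℝ) :
      HasDerivAt (fun t => φ' 0 + φ'' 0 * t + K / 2 * t ^ 2) (φ'' 0 + K * t) t :=
    ((((hasDerivAt_id' t).const_mul (φ'' 0)).const_add (φ' 0)).add
      ((hasDerivAt_pow 2 t).const_mul (K / 2))).congr_deriv (by ring)
  have hB (t : ℝ) :
      HasDerivAt (fun t => φ 0 + φ' 0 * t + φ'' 0 / 2 * t ^ 2 + K / 6 * t ^ 3)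
        (φ' 0 + φ'' 0 * t + K / 2 * t ^ 2) t :=
    (((((hasDerivAt_id' t).const_mul (φ' 0)).const_add (φ 0)).add
      ((hasDerivAt_pow 2 t).const_mul (φ'' 0 / 2))).add
      ((hasDerivAt_pow 3 t).const_mul (K / 6))).congr_deriv (by push_cast; ring)
  have hφ'_le := image_le_of_hasDerivAt_le_boundary hφ' hB' (by simp) hK
  have := image_le_of_hasDerivAt_le_boundary hφ hB (by simp)
    (fun t ht => hφ'_le (Ico_subset_Icc_self ht)) (right_mem_Icc.2 zero_le_one)
  simpa using this

section

variable {F : Type*} [NormedAddCommGroup F] [InnerProductSpace ℝ F] [CompleteSpace F]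

theorem le_taylor_add_cubic_of_lipschitz_fderiv_gradient {P : F → ℝ} {L : ℝ}
    (hP : Differentiable ℝ P) (hG : Differentiable ℝ (gradient P)) (x s : F)
    (hLip : ∀ y, ‖fderiv ℝ (gradient P) y - fderiv ℝ (gradient P) x‖ ≤ L * ‖y - x‖) :
    P (x + s) ≤
      P x + ⟪gradient P x, s⟫ + ⟪fderiv ℝ (gradient P) x s, s⟫ / 2 + L / 6 * ‖s‖ ^ 3 := by
  have hline (t : ℝ) : HasDerivAt (fun t : ℝ => x + t • s) s t := by
    simpa using ((hasDerivAt_id t).smul_const s).const_add x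
  have hφ (t : ℝ) : HasDerivAt (fun t : ℝ => P (x + t • s)) ⟪gradient P (x + t • s), s⟫ t := by
    have := (hP _).hasGradientAt.hasFDerivAt.comp_hasDerivAt t (hline t)
    simpa [Function.comp_def] using this
  have hφ' (t : ℝ) : HasDerivAt (fun t : ℝ => ⟪gradient P (x + t • s), s⟫)
      ⟪fderiv ℝ (gradient P) (x + t • s) s, s⟫ t := by
    simpa using ((hG _).hasFDerivAt.comp_hasDerivAt t (hline t)).inner ℝ (hasDerivAt_const t s)
  have hK (t : ℝ) (ht : t ∈ Ico (0 : ℝ) 1) :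
      ⟪fderiv ℝ (gradient P) (x + t • s) s, s⟫ ≤
        ⟪fderiv ℝ (gradient P) (x + (0 : ℝ) • s) s, s⟫ + L * ‖s‖ ^ 3 * t := by
    set D := fderiv ℝ (gradient P)
    have hdiff : ⟪D (x + t • s) s, s⟫ - ⟪D x s, s⟫ = ⟪(D (x + t • s) - D x) s, s⟫ := by
      rw [sub_apply, inner_sub_left]
    have hbound : ⟪(D (x + t • s) - D x) s, s⟫ ≤ L * ‖s‖ ^ 3 * t :=
      calc ⟪(D (x + t • s) - D x) s, s⟫ ≤ ‖(D (x + t • s) - D x) s‖ * ‖s‖ :=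
            real_inner_le_norm _ _
        _ ≤ ‖D (x + t • s) - D x‖ * ‖s‖ * ‖s‖ := by gcongr; exact (D (x + t • s) - D x).le_opNorm s
        _ ≤ L * ‖t • s‖ * ‖s‖ * ‖s‖ := by gcongr; simpa using hLip (x + t • s)
        _ = L * ‖s‖ ^ 3 * t := by rw [norm_smul, Real.norm_of_nonneg ht.1]; ring
    rw [zero_smul, add_zero]
    linarith
  have := le_taylor_add_cubic_of_hasDerivAt hφ hφ' hK
  simp only [one_smul, zero_smul, add_zero] at this
  linarith

theorem ContDiff.differentiable_gradient {P : F → ℝ} (hP : ContDiff ℝ 2 P) :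
    Differentiable ℝ (gradient P) :=
  ((InnerProductSpace.toDual ℝ F).symm.contDiff.comp
    (hP.fderiv_right (m := 1) (by norm_num))).differentiable one_ne_zero

omit [CompleteSpace F] in
theorem inner_le_inner_add_norm_sub_mul_norm (a b s : F) : ⟪a, s⟫ ≤ ⟪b, s⟫ + ‖a - b‖ * ‖s‖ := by
  have := real_inner_le_norm (a - b) s
  rw [inner_sub_left] at this
  linarith

theorem le_sub_of_negative_curvature_step {P : F → ℝ} {L a lmin : ℝ} (ha : 0 ≤ a)
    (hP : Differentiable ℝ P) (hG : Differentiable ℝ (gradient P)) {x g u : F} {H : F →L[ℝ] F}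
    (hLip : ∀ y, ‖fderiv ℝ (gradient P) y - fderiv ℝ (gradient P) x‖ ≤ L * ‖y - x‖)
    (heig : H u = lmin • u) (hu : ‖u‖ = 1) (hgu : ⟪g, u⟫ ≤ 0) (hlmin : lmin ≤ -(L * a) / 2)
    (hge : ‖gradient P x - g‖ ≤ L * a ^ 2 / 36)
    (hHe : ‖fderiv ℝ (gradient P) x - H‖ ≤ L * a / 18) :
    P (x + a • u) ≤ P x - L * a ^ 3 / 36 := by
  have hnorm : ‖a • u‖ = a := by rw [norm_smul, hu, Real.norm_of_nonneg ha, mul_one]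
  have hgrad : ⟪gradient P x, a • u⟫ ≤ L * a ^ 3 / 36 :=
    calc ⟪gradient P x, a • u⟫ ≤ a * ⟪g, u⟫ + ‖gradient P x - g‖ * a := by
          simpa [hnorm, real_inner_smul_right] using
            inner_le_inner_add_norm_sub_mul_norm (gradient P x) g (a • u)
      _ ≤ L * a ^ 3 / 36 := by nlinarith [mul_le_mul_of_nonneg_right hge ha]
  have hhess : ⟪fderiv ℝ (gradient P) x (a • u), a • u⟫ ≤ (lmin + L * a / 18) * a ^ 2 := by
    set D := fderiv ℝ (gradient P) x
    have hH : ⟪H (a • u), a • u⟫ = lmin * a ^ 2 := by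
      rw [map_smul, heig, smul_smul, real_inner_smul_left, real_inner_smul_right,
        real_inner_self_eq_norm_sq, hu]
      ring
    calc ⟪D (a • u), a • u⟫ ≤ ⟪H (a • u), a • u⟫ + ‖D (a • u) - H (a • u)‖ * ‖a • u‖ :=
          inner_le_inner_add_norm_sub_mul_norm _ _ _
      _ ≤ ⟪H (a • u), a • u⟫ + ‖D - H‖ * ‖a • u‖ * ‖a • u‖ := by
          gcongr; exact (D - H).le_opNorm (a • u)
      _ ≤ (lmin + L * a / 18) * a ^ 2 := by
          rw [hH, hnorm]; nlinarith [mul_le_mul_of_nonneg_right hHe (mul_nonneg ha ha)]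
  have htaylor := le_taylor_add_cubic_of_lipschitz_fderiv_gradient hP hG x (a • u) hLip
  rw [hnorm] at htaylor
  -- the four terms add up to `L a³ (1/36 - 1/4 + 1/36 + 1/6) = -L a³ / 36`
  nlinarith [mul_le_mul_of_nonneg_right hlmin (sq_nonneg a)]

end

theorem norm_le_of_lipschitz_of_approx {E F : Type*} [SeminormedAddCommGroup E]
    [SeminormedAddCommGroup F] {G : F → E} {L δ : ℝ} {x s : F} {g gp : E}
    (hLip : ‖G (x + s) - G x‖ ≤ L * ‖s‖)
    (hx : ‖G x - g‖ ≤ δ) (hxs : ‖G (x + s) - gp‖ ≤ δ) :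
    ‖gp‖ ≤ ‖g‖ + L * ‖s‖ + 2 * δ := by
  have hsplit : gp = g + (G x - g) + (G (x + s) - G x) - (G (x + s) - gp) := by abel
  rw [hsplit]
  calc _ ≤ ‖g‖ + ‖G x - g‖ + ‖G (x + s) - G x‖ + ‖G (x + s) - gp‖ :=
        (norm_sub_le _ _).trans (add_le_add_left (norm_add₃_le ..) _)
    _ ≤ ‖g‖ + L * ‖s‖ + 2 * δ := by linarith
theorem Real.rpow_three_halves {M : ℝ} (hM : 0 ≤ M) : M ^ ((3 : ℝ) / 2) = M * √M := by
  rw [show (3 : ℝ) / 2 = 1 + 1 / 2 by norm_num, Real.rpow_add' hM (by norm_num), Real.rpow_one,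
    Real.sqrt_eq_rpow]

theorem min_mul_rpow_le_mul {c d ε p : ℝ} (hc : 0 ≤ c) (hε0 : 0 ≤ ε) (hε1 : ε ≤ 1)
    (hp : 1 ≤ p) :
    min c d * ε ^ p ≤ c * ε :=
  calc min c d * ε ^ p ≤ c * ε ^ p :=
        mul_le_mul_of_nonneg_right (min_le_left c d) (Real.rpow_nonneg hε0 p)
    _ ≤ c * ε := mul_le_mul_of_nonneg_left (Real.rpow_le_self_of_le_one hε0 hε1 hp) hc

section

variable {L M : ℝ}

theorem mul_sqrt_div_self (hL : 0 ≤ L) : L * √(M / L) = √L * √M := by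
  rw [Real.sqrt_div' M hL, mul_div_left_comm, Real.div_sqrt, mul_comm]

theorem mul_sqrt_div_self_sq (hL : 0 < L) (hM : 0 ≤ M) : L * √(M / L) ^ 2 = M := by
  rw [Real.sq_sqrt (div_nonneg hM hL.le), mul_div_cancel₀ _ hL.ne']

theorem mul_sqrt_div_self_pow_three (hL : 0 < L) (hM : 0 ≤ M) :
    L * √(M / L) ^ 3 = M ^ ((3 : ℝ) / 2) / √L := by
  rw [pow_succ, ← mul_assoc, mul_sqrt_div_self_sq hL hM, Real.sqrt_div' M hL.le,
    Real.rpow_three_halves hM, mul_div_assoc]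

end

theorem statement18_general {n : ℕ} (P : En n → ℝ) (L₁ L₂ ε : ℝ)
    (hL₂ : 0 < L₂) (hε : 0 < ε) (hε1 : ε ≤ 1)
    (hP : ContDiff ℝ 2 P)
    (hgradLip : ∀ x x' : En n, ‖gradient P x - gradient P x'‖ ≤ L₁ * ‖x - x'‖)
    (hhessLip : ∀ x x' : En n, ‖hessP P x - hessP P x'‖ ≤ L₂ * ‖x - x'‖)
    (x s g gp u : En n) (H : En n →L[ℝ] En n) (lmin : ℝ)
    (heig : H u = lmin • u)
    (hu : ‖u‖ = 1)
    (hgu : ⟪g, u⟫ ≤ 0)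
    (hlmin : lmin ≤ -(1 / 2) * Real.sqrt (L₂ * max ‖g‖ ε))
    (hs : s = Real.sqrt (max ‖g‖ ε / L₂) • u)
    (hge : ‖gradient P x - g‖ ≤ min (1 / 36) (Real.sqrt L₂ / (12 * L₁)) * ε ^ ((3 : ℝ) / 2))
    (hHe : ‖hessP P x - H‖ ≤ Real.sqrt L₂ / 18 * Real.sqrt ε)
    (hge' : ‖gradient P (x + s) - gp‖ ≤
      min (1 / 36) (Real.sqrt L₂ / (12 * L₁)) * ε ^ ((3 : ℝ) / 2)) :
    P (x + s) ≤ P x - 1 / (36 * Real.sqrt L₂) * (max ‖g‖ ε) ^ ((3 : ℝ) / 2) ∧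
    ‖gp‖ ≤ 1 + L₁ / Real.sqrt L₂ * Real.sqrt (max ‖g‖ ε) + max ‖g‖ ε := by
  set M := max ‖g‖ ε
  have hεM : ε ≤ M := le_max_right _ _
  have hM : 0 ≤ M := hε.le.trans hεM
  have hnorm : ‖s‖ = √(M / L₂) := by
    rw [hs, norm_smul, hu, Real.norm_of_nonneg (Real.sqrt_nonneg _), mul_one]
  have hε₁ : min (1 / 36) (√L₂ / (12 * L₁)) * ε ^ ((3 : ℝ) / 2) ≤ 1 / 36 * ε :=
    min_mul_rpow_le_mul (by norm_num) hε.le hε1 (by norm_num)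
  constructor
  · have hdescent := le_sub_of_negative_curvature_step (Real.sqrt_nonneg (M / L₂))
      (hP.differentiable two_ne_zero) hP.differentiable_gradient (fun y => hhessLip y x)
      heig hu hgu
      (by rw [Real.sqrt_mul hL₂.le, ← mul_sqrt_div_self hL₂.le] at hlmin; linarith)
      (hge.trans (hε₁.trans (by rw [mul_sqrt_div_self_sq hL₂ hM]; linarith)))
      (hHe.trans (by rw [mul_sqrt_div_self hL₂.le, mul_div_right_comm]; gcongr))
    rw [mul_sqrt_div_self_pow_three hL₂ hM] at hdescent
    calc P (x + s) ≤ _ := hs ▸ hdescent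
      _ = _ := by ring
  · calc ‖gp‖ ≤ ‖g‖ + L₁ * ‖s‖ + 2 * (1 / 36 * ε) :=
          norm_le_of_lipschitz_of_approx (by simpa using hgradLip (x + s) x)
            (hge.trans hε₁) (hge'.trans hε₁)
      _ ≤ 1 + L₁ / √L₂ * √M + M := by
          have hstep : L₁ * ‖s‖ = L₁ / √L₂ * √M := by
            rw [hnorm, Real.sqrt_div' M hL₂.le]; ring
          linarith [le_max_left ‖g‖ ε]

/-- Negative-curvature step: with `ε₁ = min{1/36, √L₂/(12L₁)}·ε^{3/2}`,
`ε₂ = (√L₂/18)·ε^{1/2}`, `ε ≤ 1`, `M = max{‖g‖, ε}`, if `λ_min(H) ≤ −½√(L₂M)` with unit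
eigenvector `u` (for the smallest eigenvalue `lmin`) satisfying `⟪g, u⟫ ≤ 0`, and
`s = √(M/L₂)·u`, and the estimates are accurate, then
`P(x+s) ≤ P(x) − (1/(36√L₂))M^{3/2}` and `‖g₊‖ ≤ 1 + (L₁/√L₂)√M + M`. -/
theorem statement18 {n : ℕ} (P : En n → ℝ) (L₁ L₂ ε : ℝ)
    (hL₁ : 0 < L₁) (hL₂ : 0 < L₂) (hε : 0 < ε) (hε1 : ε ≤ 1)
    (hP : ContDiff ℝ 2 P)
    (hgradLip : ∀ x x' : En n, ‖gradient P x - gradient P x'‖ ≤ L₁ * ‖x - x'‖)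
    (hhessLip : ∀ x x' : En n, ‖hessP P x - hessP P x'‖ ≤ L₂ * ‖x - x'‖)
    (x s g gp u : En n) (H : En n →L[ℝ] En n) (hH : IsSelfAdjoint H) (lmin : ℝ)
    (hlow : ∀ v : En n, lmin * ‖v‖ ^ 2 ≤ ⟪H v, v⟫)
    (heig : H u = lmin • u)
    (hu : ‖u‖ = 1)
    (hgu : ⟪g, u⟫ ≤ 0)
    (hlmin : lmin ≤ -(1 / 2) * Real.sqrt (L₂ * max ‖g‖ ε))
    (hs : s = Real.sqrt (max ‖g‖ ε / L₂) • u)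
    (hge : ‖gradient P x - g‖ ≤ min (1 / 36) (Real.sqrt L₂ / (12 * L₁)) * ε ^ ((3 : ℝ) / 2))
    (hHe : ‖hessP P x - H‖ ≤ Real.sqrt L₂ / 18 * Real.sqrt ε)
    (hge' : ‖gradient P (x + s) - gp‖ ≤
      min (1 / 36) (Real.sqrt L₂ / (12 * L₁)) * ε ^ ((3 : ℝ) / 2)) :
    P (x + s) ≤ P x - 1 / (36 * Real.sqrt L₂) * (max ‖g‖ ε) ^ ((3 : ℝ) / 2) ∧
    ‖gp‖ ≤ 1 + L₁ / Real.sqrt L₂ * Real.sqrt (max ‖g‖ ε) + max ‖g‖ ε :=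
  statement18_general P L₁ L₂ ε hL₂ hε hε1 hP hgradLip hhessLip x s g gp u H lmin heig hu hgu hlmin
    hs hge hHe hge'
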